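/- arXiv:2205.04580 — 4 statements merged into one kernel-verified Lean document; each statement's English description precedes it below -/
import Mathlib

section
/- Suppose f: R^n → R is twice continuously differentiable and 2s-restricted strongly smooth with constant L_{2s} > 0, i.e., f(z) ≤ f(x) + ⟨∇f(x), z − x⟩ + (L_{2s}/2)‖z − x‖² for all s-sparse z, x with ‖z − x‖_0 ≤ 2s. Let σ > 0, ‖x‖_0 ≤ s, 0 < α ≤ 1/(σ + L_{2s}), and u ∈ Π_s(x − α∇f(x)). Then f(u) ≤ f(x) − (σ/2)‖u − x‖². -/
open scoped InnerProductSpace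
open RealInnerProductSpace

/-- `x` is `s`-sparse: it has at most `s` nonzero entries. -/
def Sparse {n : ℕ} (s : ℕ) (x : EuclideanSpace ℝ (Fin n)) : Prop :=
  {i | x i ≠ 0}.ncard ≤ s

/-- The hard-thresholding operator `Π_s(x) = argmin {‖w - x‖ : ‖w‖₀ ≤ s}`. -/
def HT {n : ℕ} (s : ℕ) (x : EuclideanSpace ℝ (Fin n)) : Set (EuclideanSpace ℝ (Fin n)) :=
  {u | Sparse s u ∧ ∀ w, Sparse s w → ‖u - x‖ ≤ ‖w - x‖}
/-- Sufficient decrease of the gradient-projection step under `2s`-restricted strong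
smoothness: if `0 < α ≤ 1/(σ + L)` and `u ∈ Π_s(x - α∇f(x))`,
then `f(u) ≤ f(x) - (σ/2)‖u - x‖²`. -/
theorem stmt_4 {n s : ℕ} (f : EuclideanSpace ℝ (Fin n) → ℝ) (hf : ContDiff ℝ 2 f)
    (L σ : ℝ) (hL : 0 < L) (hσ : 0 < σ)
    (hRSS : ∀ z x : EuclideanSpace ℝ (Fin n), Sparse s z → Sparse s x →
      Sparse (2 * s) (z - x) →
      f z ≤ f x + ⟪gradient f x, z - x⟫_ℝ + (L / 2) * ‖z - x‖ ^ 2)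
    (x u : EuclideanSpace ℝ (Fin n)) (hx : Sparse s x)
    (α : ℝ) (hα0 : 0 < α) (hα : α ≤ 1 / (σ + L))
    (hu : u ∈ HT s (x - α • gradient f x)) :
    f u ≤ f x - (σ / 2) * ‖u - x‖ ^ 2 := by
  obtain ⟨hus, hmin⟩ := hu
  set g := gradient f x with hg
  -- sparsity of u - x
  have hsub : {i | (u - x) i ≠ 0} ⊆ {i | u i ≠ 0} ∪ {i | x i ≠ 0} := by
    intro i hi
    by_contra hc
    simp only [Set.mem_union, Set.mem_setOf_eq, not_or] at hc
    apply hi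
    show u i - x i = 0
    simp only [Set.mem_setOf_eq, not_not] at hc
    rw [hc.1, hc.2, sub_zero]
  have hsparse : Sparse (2 * s) (u - x) := by
    unfold Sparse
    calc {i | (u - x) i ≠ 0}.ncard ≤ ({i | u i ≠ 0} ∪ {i | x i ≠ 0}).ncard :=
          Set.ncard_le_ncard hsub (Set.toFinite _)
      _ ≤ {i | u i ≠ 0}.ncard + {i | x i ≠ 0}.ncard :=
          Set.ncard_union_le _ _
      _ ≤ s + s := add_le_add hus hx
      _ = 2 * s := by ring
  -- minimality at w = x
  have hkey : ‖u - (x - α • g)‖ ≤ ‖x - (x - α • g)‖ := hmin x hx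
  have hkey2 : ‖(u - x) + α • g‖ ^ 2 ≤ ‖α • g‖ ^ 2 := by
    have h1 : u - (x - α • g) = (u - x) + α • g := by abel
    have h2 : x - (x - α • g) = α • g := by abel
    rw [h1, h2] at hkey
    exact pow_le_pow_left₀ (norm_nonneg _) hkey 2
  have hexp : ‖(u - x) + α • g‖ ^ 2
      = ‖u - x‖ ^ 2 + 2 * ⟪u - x, α • g⟫_ℝ + ‖α • g‖ ^ 2 := by
    rw [@norm_add_sq_real]
  have hip : ⟪u - x, α • g⟫_ℝ = α * ⟪g, u - x⟫_ℝ := by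
    rw [real_inner_smul_right, real_inner_comm]
  have hineq : ‖u - x‖ ^ 2 + 2 * α * ⟪g, u - x⟫_ℝ ≤ 0 := by
    nlinarith [hexp, hkey2, hip]
  have hgrad : ⟪g, u - x⟫_ℝ ≤ -(1 / (2 * α)) * ‖u - x‖ ^ 2 := by
    have hα0' : 0 < 2 * α := by linarith
    rw [neg_mul, le_neg, div_mul_eq_mul_div, div_le_iff₀ hα0']
    nlinarith [hineq]
  have hRSSu := hRSS u x hus hx hsparse
  have hαinv : σ + L ≤ 1 / α := by
    rw [le_div_iff₀ hα0]
    have hσL : 0 < σ + L := by linarith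
    calc (σ + L) * α ≤ (σ + L) * (1 / (σ + L)) := by
          exact mul_le_mul_of_nonneg_left hα (le_of_lt hσL)
      _ = 1 := mul_one_div_cancel (ne_of_gt hσL)
  have hnn : 0 ≤ ‖u - x‖ ^ 2 := by positivity
  have h1a : 1 / (2 * α) = (1 / α) / 2 := by
    rw [one_div, one_div, div_eq_mul_inv]
    rw [mul_inv]
    ring
  calc f u ≤ f x + ⟪g, u - x⟫_ℝ + (L / 2) * ‖u - x‖ ^ 2 := hRSSu
    _ ≤ f x + -(1 / (2 * α)) * ‖u - x‖ ^ 2 + (L / 2) * ‖u - x‖ ^ 2 := by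
        linarith [hgrad]
    _ ≤ f x - (σ / 2) * ‖u - x‖ ^ 2 := by
        rw [h1a]
        nlinarith [hαinv, hnn]
end

section
/- Let f: R^n → R be twice continuously differentiable. Suppose x* ∈ R^n with ‖x*‖_0 ≤ s satisfies the conditions: ∇_{T*} f(x*) = 0 where T* = supp(x*) if ‖x*‖_0 = s, and ∇f(x*) = 0 if ‖x*‖_0 < s. If f is s-restricted strongly convex locally at x* with constant ℓ_s > 0, then x* is a unique (strict, isolated) local minimizer of min{f(x) : ‖x‖_0 ≤ s}. -/
open scoped InnerProductSpace
open RealInnerProductSpace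

/-- Coordinatewise bound by the Euclidean norm. -/
lemma coord_le_norm {n : ℕ} (v : EuclideanSpace ℝ (Fin n)) (i : Fin n) :
    |v i| ≤ ‖v‖ := by
  rw [EuclideanSpace.norm_eq]
  have h1 : |v i| = Real.sqrt (‖v i‖ ^ 2) := by
    rw [Real.sqrt_sq_eq_abs]; simp
  rw [h1]
  apply Real.sqrt_le_sqrt
  exact Finset.single_le_sum (f := fun j => ‖v j‖ ^ 2)
    (fun j _ => by positivity) (Finset.mem_univ i)

/-- A point satisfying the first-order conditions (1-KKT) that is locally `s`-restricted
strongly convex is a unique (strict, isolated) local minimizer of the sparsity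
constrained problem. -/
theorem stmt_5 {n s : ℕ} (f : EuclideanSpace ℝ (Fin n) → ℝ) (hf : ContDiff ℝ 2 f)
    (xs : EuclideanSpace ℝ (Fin n)) (hxs : Sparse s xs)
    (hKKT1 : {i | xs i ≠ 0}.ncard = s → ∀ i, xs i ≠ 0 → gradient f xs i = 0)
    (hKKT2 : {i | xs i ≠ 0}.ncard < s → gradient f xs = 0)
    (ℓ : ℝ) (hℓ : 0 < ℓ)
    (ε : ℝ) (hε : 0 < ε)
    (hRSC : ∀ z x : EuclideanSpace ℝ (Fin n), Sparse s z → Sparse s x →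
      Sparse s (z - x) → ‖z - xs‖ ≤ ε → ‖x - xs‖ ≤ ε →
      f z ≥ f x + ⟪gradient f x, z - x⟫_ℝ + (ℓ / 2) * ‖z - x‖ ^ 2) :
    ∃ δ > 0, ∀ x : EuclideanSpace ℝ (Fin n), Sparse s x → ‖x - xs‖ ≤ δ → x ≠ xs →
      f xs < f x := by
  -- choose a positive constant `c` strictly below every nonzero |xs i|
  obtain ⟨c, hc0, hc⟩ : ∃ c > 0, ∀ i, xs i ≠ 0 → c < |xs i| := by
    by_cases hT : (Finset.univ.filter (fun i : Fin n => xs i ≠ 0)).Nonempty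
    · set F := Finset.univ.filter (fun i : Fin n => xs i ≠ 0) with hF
      set m := F.inf' hT (fun i => |xs i|) with hm
      have hmpos : 0 < m := by
        rw [hm, Finset.lt_inf'_iff]
        intro i hi
        have : xs i ≠ 0 := (Finset.mem_filter.mp hi).2
        positivity
      refine ⟨m / 2, by positivity, fun i hi => ?_⟩
      have hmem : i ∈ F := Finset.mem_filter.mpr ⟨Finset.mem_univ i, hi⟩
      have : m ≤ |xs i| := Finset.inf'_le _ hmem
      linarith
    · refine ⟨1, one_pos, fun i hi => absurd ?_ hT⟩
      exact ⟨i, Finset.mem_filter.mpr ⟨Finset.mem_univ i, hi⟩⟩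
  refine ⟨min ε c, lt_min hε hc0, ?_⟩
  intro x hx hxd hxne
  -- support of xs is contained in support of x
  have hTS : ∀ i, xs i ≠ 0 → x i ≠ 0 := by
    intro i hi hx0
    have h1 : c < |xs i| := hc i hi
    have h2 : |x i - xs i| ≤ c := by
      have := coord_le_norm (x - xs) i
      have hxx : (x - xs) i = x i - xs i := rfl
      rw [hxx] at this
      exact this.trans (hxd.trans (min_le_right _ _))
    rw [hx0, zero_sub, abs_neg] at h2
    linarith
  -- x - xs is s-sparse
  have hsub : {i | (x - xs) i ≠ 0} ⊆ {i | x i ≠ 0} := by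
    intro i hi
    simp only [Set.mem_setOf_eq] at hi ⊢
    intro hx0
    apply hi
    have hxs0 : xs i = 0 := by
      by_contra h
      exact hTS i h hx0
    show x i - xs i = 0
    rw [hx0, hxs0, sub_zero]
  have hsparse : Sparse s (x - xs) :=
    le_trans (Set.ncard_le_ncard hsub (Set.toFinite _)) hx
  have hnormε : ‖x - xs‖ ≤ ε := hxd.trans (min_le_left _ _)
  have key := hRSC x xs hx hxs hsparse hnormε (by simp [hε.le])
  -- the inner product vanishes
  have hinner : ⟪gradient f xs, x - xs⟫_ℝ = 0 := by
    rcases lt_or_eq_of_le hxs with h | h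
    · rw [hKKT2 h]; simp
    · have hgrad := hKKT1 h
      rw [PiLp.inner_apply]
      apply Finset.sum_eq_zero
      intro i _
      by_cases hxsi : xs i = 0
      · -- then i ∉ supp x either, since supp x = supp xs
        have hST : {i | xs i ≠ 0} = {i | x i ≠ 0} := by
          apply Set.eq_of_subset_of_ncard_le (fun j hj => hTS j hj) ?_ (Set.toFinite _)
          show {i | x i ≠ 0}.ncard ≤ {i | xs i ≠ 0}.ncard
          rw [h]; exact hx
        have hxi : x i = 0 := by
          by_contra hxi
          exact (hST ▸ (hxi : i ∈ {i | x i ≠ 0}) : i ∈ {i | xs i ≠ 0}) hxsi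
        have hz : (x - xs) i = 0 := by
          show x i - xs i = 0
          rw [hxi, hxsi, sub_zero]
        simp [hz]
      · simp [hgrad i hxsi]
  rw [hinner, add_zero] at key
  have hpos : 0 < ‖x - xs‖ := by
    rw [norm_pos_iff]
    exact sub_ne_zero.mpr hxne
  have hq : 0 < ℓ / 2 * ‖x - xs‖ ^ 2 := by positivity
  linarith
end

section
/- Let f be twice continuously differentiable and 2s-restricted strongly convex with constant ℓ_{2s} > 0. If x* is an α-stationary point of min{f(x) : ‖x‖_0 ≤ s} with ‖x*‖_0 < s, then x* is the unique global minimizer, and moreover f(x) ≥ f(x*) + (ℓ_{2s}/2)‖x − x*‖² for every s-sparse x. -/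
open scoped InnerProductSpace
open RealInnerProductSpace

/-! If `‖x*‖₀ < s`, hard thresholding of `x* - α ∇f(x*)` may keep `x*` and still fit any one
further coordinate exactly; optimality of `x*` among these competitors forces every entry of
`∇f(x*)` to vanish. Restricted strong convexity at a critical point is then quadratic growth
over all `s`-sparse vectors, since the difference of two `s`-sparse vectors is `2s`-sparse. -/

namespace EuclideanSpace

variable {n : ℕ}

lemma ncard_support_sub_le (x y : EuclideanSpace ℝ (Fin n)) :
    {j | (x - y) j ≠ 0}.ncard ≤ {j | x j ≠ 0}.ncard + {j | y j ≠ 0}.ncard := by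
  have hsub : {j | (x - y) j ≠ 0} ⊆ {j | x j ≠ 0} ∪ {j | y j ≠ 0} := by
    intro j hj
    by_contra h
    simp only [Set.mem_union, Set.mem_ofPred_eq, not_or, not_not] at h
    simp [h.1, h.2] at hj
  exact (Set.ncard_le_ncard hsub).trans (Set.ncard_union_le _ _)

lemma ncard_support_single_le (i : Fin n) (a : ℝ) :
    {j | (EuclideanSpace.single i a : EuclideanSpace ℝ (Fin n)) j ≠ 0}.ncard ≤ 1 := by
  have hsub : {j | (EuclideanSpace.single i a : EuclideanSpace ℝ (Fin n)) j ≠ 0} ⊆ {i} := by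
    intro j hj
    by_contra h
    simp [PiLp.single_apply, Set.mem_singleton_iff.not.mp h] at hj
  exact (Set.ncard_le_ncard hsub).trans (Set.ncard_singleton i).le

lemma norm_sub_single_sq_add_sq (v : EuclideanSpace ℝ (Fin n)) (i : Fin n) :
    ‖v - EuclideanSpace.single i (v i)‖ ^ 2 + v i ^ 2 = ‖v‖ ^ 2 := by
  rw [norm_sub_sq_real, EuclideanSpace.inner_single_right, PiLp.norm_single,
    Real.norm_eq_abs, sq_abs]
  simp only [conj_trivial]
  ring

end EuclideanSpace

lemma Sparse.sub {n s t : ℕ} {x y : EuclideanSpace ℝ (Fin n)} (hx : Sparse s x)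
    (hy : Sparse t y) : Sparse (s + t) (x - y) :=
  (EuclideanSpace.ncard_support_sub_le x y).trans (add_le_add hx hy)

lemma eq_zero_of_mem_HT_sub {n s : ℕ} {x v : EuclideanSpace ℝ (Fin n)}
    (hx : {i | x i ≠ 0}.ncard < s) (hHT : x ∈ HT s (x - v)) : v = 0 := by
  ext i
  set e : EuclideanSpace ℝ (Fin n) := EuclideanSpace.single i (v i)
  -- The competitor `x - e` matches `x - v` in coordinate `i` and has at most one nonzero entry more than `x`.
  have hsparse : Sparse s (x - e) :=
    (EuclideanSpace.ncard_support_sub_le x e).trans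
      (by linarith [EuclideanSpace.ncard_support_single_le i (v i)])
  have hle : ‖v‖ ^ 2 ≤ ‖v - e‖ ^ 2 := by
    have h := hHT.2 _ hsparse
    rw [show x - (x - v) = v by abel, show x - e - (x - v) = v - e by abel] at h
    gcongr
  have hpyth := EuclideanSpace.norm_sub_single_sq_add_sq v i
  simpa using (show v i ^ 2 ≤ 0 by linarith)

theorem stmt_7_general {n s : ℕ} (f : EuclideanSpace ℝ (Fin n) → ℝ)
    (ℓ : ℝ) (hℓ : 0 < ℓ)
    (hRSC : ∀ z x : EuclideanSpace ℝ (Fin n), Sparse s z → Sparse s x →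
      Sparse (2 * s) (z - x) →
      f z ≥ f x + ⟪gradient f x, z - x⟫_ℝ + (ℓ / 2) * ‖z - x‖ ^ 2)
    (xs : EuclideanSpace ℝ (Fin n)) (hcard : {i | xs i ≠ 0}.ncard < s)
    (α : ℝ) (hα : 0 < α) (hstat : xs ∈ HT s (xs - α • gradient f xs)) :
    (∀ x : EuclideanSpace ℝ (Fin n), Sparse s x →
        f xs + (ℓ / 2) * ‖x - xs‖ ^ 2 ≤ f x) ∧
    (∀ x : EuclideanSpace ℝ (Fin n), Sparse s x → x ≠ xs → f xs < f x) := by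
  have hxs : Sparse s xs := hcard.le
  have hgrad : gradient f xs = 0 :=
    (smul_eq_zero.mp (eq_zero_of_mem_HT_sub hcard hstat)).resolve_left hα.ne'
  have growth : ∀ x, Sparse s x → f xs + (ℓ / 2) * ‖x - xs‖ ^ 2 ≤ f x := by
    intro x hx
    have h := hRSC x xs hx hxs (two_mul s ▸ hx.sub hxs)
    rw [hgrad, inner_zero_left] at h
    linarith
  refine ⟨growth, fun x hx hne => ?_⟩
  have hdist : 0 < ‖x - xs‖ := norm_pos_iff.mpr (sub_ne_zero_of_ne hne)
  have hgap : 0 < (ℓ / 2) * ‖x - xs‖ ^ 2 := by positivity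
  linarith [growth x hx]

/-- An `α`-stationary point `x*` with `‖x*‖₀ < s` of a `2s`-restricted strongly convex
function is the unique global minimizer over `s`-sparse vectors, with quadratic growth. -/
theorem stmt_7 {n s : ℕ} (f : EuclideanSpace ℝ (Fin n) → ℝ) (hf : ContDiff ℝ 2 f)
    (ℓ : ℝ) (hℓ : 0 < ℓ)
    (hRSC : ∀ z x : EuclideanSpace ℝ (Fin n), Sparse s z → Sparse s x →
      Sparse (2 * s) (z - x) →
      f z ≥ f x + ⟪gradient f x, z - x⟫_ℝ + (ℓ / 2) * ‖z - x‖ ^ 2)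
    (xs : EuclideanSpace ℝ (Fin n)) (hcard : {i | xs i ≠ 0}.ncard < s)
    (α : ℝ) (hα : 0 < α) (hstat : xs ∈ HT s (xs - α • gradient f xs)) :
    (∀ x : EuclideanSpace ℝ (Fin n), Sparse s x →
        f xs + (ℓ / 2) * ‖x - xs‖ ^ 2 ≤ f x) ∧
    (∀ x : EuclideanSpace ℝ (Fin n), Sparse s x → x ≠ xs → f xs < f x) :=
  stmt_7_general f ℓ hℓ hRSC xs hcard α hα hstat
end

section
/- Let f be twice continuously differentiable and 2s-restricted strongly convex with constant ℓ_{2s} > 0. If x* is an α-stationary point of min{f(x) : ‖x‖_0 ≤ s} with ‖x*‖_0 = s and α > 1/ℓ_{2s}, then x* is the unique global minimizer; in fact 2f(x) ≥ 2f(x*) + (ℓ_{2s} − 1/α)‖x − x*‖² for every s-sparse x. -/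
open scoped InnerProductSpace
open RealInnerProductSpace

/-- An `α`-stationary point `x*` with `‖x*‖₀ = s` and `α > 1/ℓ` of a `2s`-restricted
strongly convex function is the unique global minimizer over `s`-sparse vectors, and
`2f(x) ≥ 2f(x*) + (ℓ − 1/α)‖x − x*‖²` for every `s`-sparse `x`. -/
theorem stmt_8 {n s : ℕ} (f : EuclideanSpace ℝ (Fin n) → ℝ) (hf : ContDiff ℝ 2 f)
    (ℓ : ℝ) (hℓ : 0 < ℓ)
    (hRSC : ∀ z x : EuclideanSpace ℝ (Fin n), Sparse s z → Sparse s x →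
      Sparse (2 * s) (z - x) →
      f z ≥ f x + ⟪gradient f x, z - x⟫_ℝ + (ℓ / 2) * ‖z - x‖ ^ 2)
    (xs : EuclideanSpace ℝ (Fin n)) (hcard : {i | xs i ≠ 0}.ncard = s)
    (α : ℝ) (hα : 1 / ℓ < α) (hstat : xs ∈ HT s (xs - α • gradient f xs)) :
    (∀ x : EuclideanSpace ℝ (Fin n), Sparse s x →
        2 * f xs + (ℓ - 1 / α) * ‖x - xs‖ ^ 2 ≤ 2 * f x) ∧
    (∀ x : EuclideanSpace ℝ (Fin n), Sparse s x → x ≠ xs → f xs < f x) := by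
  have hα0 : 0 < α := lt_trans (by positivity) hα
  have hxssp : Sparse s xs := hstat.1
  set g := gradient f xs with hg
  -- key: for every s-sparse w, 0 ≤ ‖w - xs‖^2 + 2α⟪g, w - xs⟫
  have key : ∀ w : EuclideanSpace ℝ (Fin n), Sparse s w →
      0 ≤ ‖w - xs‖ ^ 2 + 2 * α * ⟪g, w - xs⟫_ℝ := by
    intro w hw
    have h := hstat.2 w hw
    have e1 : xs - (xs - α • g) = α • g := by abel
    have e2 : w - (xs - α • g) = (w - xs) + α • g := by abel
    rw [e1, e2] at h
    have hsq : ‖α • g‖ ^ 2 ≤ ‖(w - xs) + α • g‖ ^ 2 := by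
      exact pow_le_pow_left₀ (norm_nonneg _) h 2
    rw [norm_add_sq_real] at hsq
    have hin : ⟪w - xs, α • g⟫_ℝ = α * ⟪g, w - xs⟫_ℝ := by
      rw [real_inner_smul_right, real_inner_comm]
    nlinarith [hsq, hin]
  have main : ∀ x : EuclideanSpace ℝ (Fin n), Sparse s x →
      2 * f xs + (ℓ - 1 / α) * ‖x - xs‖ ^ 2 ≤ 2 * f x := by
    intro x hx
    have hdiff : Sparse (2 * s) (x - xs) := by
      unfold Sparse
      have hsub : {i | (x - xs) i ≠ 0} ⊆ {i | x i ≠ 0} ∪ {i | xs i ≠ 0} := by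
        intro i hi
        by_contra hc
        simp only [Set.mem_union, Set.mem_setOf_eq, not_or, not_not] at hc
        apply hi
        show x i - xs i = 0
        rw [hc.1, hc.2, sub_zero]
      calc {i | (x - xs) i ≠ 0}.ncard
          ≤ ({i | x i ≠ 0} ∪ {i | xs i ≠ 0}).ncard :=
            Set.ncard_le_ncard hsub (Set.toFinite _)
        _ ≤ {i | x i ≠ 0}.ncard + {i | xs i ≠ 0}.ncard := Set.ncard_union_le _ _
        _ ≤ s + s := add_le_add hx hxssp
        _ = 2 * s := by ring
    have hrsc := hRSC x xs hx hxssp hdiff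
    have hkey := key x hx
    have h1α : (1 / α) * α = 1 := by field_simp
    nlinarith [hrsc, hkey, sq_nonneg ‖x - xs‖, mul_pos hα0 hℓ]
  refine ⟨main, ?_⟩
  intro x hx hne
  have hN : 0 < ‖x - xs‖ ^ 2 := by
    have : x - xs ≠ 0 := sub_ne_zero.mpr hne
    exact pow_pos (norm_pos_iff.mpr this) 2
  have hc : 0 < ℓ - 1 / α := by
    have h1 : 1 / α < ℓ := by
      rw [div_lt_iff₀ hα0]
      rw [div_lt_iff₀ hℓ] at hα
      linarith
    linarith
  have := main x hx
  nlinarith [mul_pos hc hN]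
end
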